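/- For all integers p, q ≥ 0, the polynomial A_{p,q}(t) := Σ_{k=0}^{q} γ_{k,p,q} t^k equals Σ_{W ∈ 𝒫(p,q)} t^{d(W)}, where d(W) is the number of diagonal steps of the weighted Delannoy path W. -/

import Mathlib

/-- A signed `(p,q)`-involution: a pair `(π, ε)` where `π` is an involution of
`{1,…,p+q}` and `ε` assigns a sign (`true` = `+`, `false` = `-`) to each fixed
point of `π` (we normalize `ε` to be `true` on non-fixed points), such that the
number of fixed points with sign `+` minus the number of fixed points with
sign `-` equals `p - q`. -/
def IsSignedInv (p q : ℕ) (x : Equiv.Perm (Fin (p + q)) × (Fin (p + q) → Bool)) : Prop :=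
  x.1 * x.1 = 1 ∧ (∀ i, x.1 i ≠ i → x.2 i = true) ∧
    ((Finset.univ.filter fun i => x.1 i = i ∧ x.2 i = true).card : ℤ) -
      ((Finset.univ.filter fun i => x.1 i = i ∧ x.2 i = false).card : ℤ) = (p : ℤ) - (q : ℤ)

/-- `γ_{k,p,q}`: the number of signed `(p,q)`-involutions whose underlying
involution has exactly `k` two-cycles, i.e. exactly `2k` non-fixed points. -/
noncomputable def gammaCount (k p q : ℕ) : ℕ :=
  Nat.card {x : Equiv.Perm (Fin (p + q)) × (Fin (p + q) → Bool) //
    IsSignedInv p q x ∧ (Finset.univ.filter fun i => x.1 i ≠ i).card = 2 * k}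

/-- `α_{p,q}`: the number of signed `(p,q)`-involutions. -/
noncomputable def alphaCount (p q : ℕ) : ℕ :=
  Nat.card {x : Equiv.Perm (Fin (p + q)) × (Fin (p + q) → Bool) // IsSignedInv p q x}
/-- A step of a lattice path: east `(1,0)`, north `(0,1)`, or diagonal `(1,1)`. -/
inductive DStep : Type
  | E | N | D
deriving DecidableEq

/-- The displacement vector of a step. -/
def stepVec : DStep → ℕ × ℕ
  | .E => (1, 0)
  | .N => (0, 1)
  | .D => (1, 1)

/-- A `(p,q)` Delannoy path: a sequence of steps `E`, `N`, `D` whose total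
displacement from `(0,0)` is `(p,q)`. -/
def IsDelannoy (p q : ℕ) (l : List DStep) : Prop :=
  (l.map stepVec).sum = (p, q)

/-- `D(p,q)`, the number of `(p,q)` Delannoy paths. -/
noncomputable def delannoyNum (p q : ℕ) : ℕ :=
  Nat.card {l : List DStep // IsDelannoy p q l}

/-- The weight of the part of a Delannoy path starting at the given lattice
point: a diagonal step starting at `(a,b)` contributes a factor `a+b+1`,
other steps contribute `1`. -/
def weightFrom : ℕ × ℕ → List DStep → ℕ
  | _, [] => 1
  | ab, s :: t => (if s = DStep.D then ab.1 + ab.2 + 1 else 1) * weightFrom (ab + stepVec s) t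

/-- The weight `ω(L)` of a Delannoy path `L` (starting at the origin): the
product over all diagonal steps going from a point `(a,b)` to `(a+1,b+1)`
of the numbers `a+b+1`. -/
def weight (l : List DStep) : ℕ := weightFrom (0, 0) l

/-- Validity of labels along a weighted Delannoy path starting at the given
lattice point: a diagonal step starting at `(a,b)` may carry any label `m`
with `1 ≤ m ≤ a+b+1`; non-diagonal steps carry no label (normalized to `0`). -/
def IsWeightedFrom : ℕ × ℕ → List (DStep × ℕ) → Prop
  | _, [] => True
  | ab, s :: t =>
      (if s.1 = DStep.D then 1 ≤ s.2 ∧ s.2 ≤ ab.1 + ab.2 + 1 else s.2 = 0) ∧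
        IsWeightedFrom (ab + stepVec s.1) t

/-- A weighted `(p,q)` Delannoy path: a `(p,q)` Delannoy path together with an
integer label on each diagonal step, a diagonal step from `(a,b)` to
`(a+1,b+1)` carrying a label `m` with `1 ≤ m ≤ a+b+1`. -/
def IsWeightedDelannoy (p q : ℕ) (l : List (DStep × ℕ)) : Prop :=
  ((l.map fun s => stepVec s.1).sum = (p, q)) ∧ IsWeightedFrom (0, 0) l

/-- The number of diagonal steps of a weighted Delannoy path. -/
def dcount (l : List (DStep × ℕ)) : ℕ := (l.filter fun s => decide (s.1 = DStep.D)).length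


/-!
Both sides satisfy `A(p+1,q+1) = A(p,q+1) + A(p+1,q) + (p+q+1) t A(p,q)` with `A(p,0) = A(0,q) = 1`.
For paths, classify by the last step: an east or north step, or one of the `p+q+1` labelled
diagonal steps from `(p,q)`. For signed involutions of `n+1` points with `d = #(+) - #(-)`,
classify by the image of one point `a`: if `a` is fixed, removing it with its sign changes `d` by
`∓1`; otherwise `a` is swapped with one of `n` other points `c`, and removing the two-cycle
`(a c)` leaves a signed involution of `n-1` points with the same `d` and one two-cycle fewer.
Removing points is done on an arbitrary finite type, by gluing a signed involution from its
restrictions to an invariant set and to the complement; the count depends only on the cardinality.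
-/

open Finset Polynomial Equiv

def IsSignedInvolution {α : Type*} (x : Perm α × (α → Bool)) : Prop :=
  ∀ i, x.1 (x.1 i) = i ∧ (x.1 i ≠ i → x.2 i = true)

def signBalance {α : Type*} [Fintype α] [DecidableEq α] (x : Perm α × (α → Bool)) : ℤ :=
  ∑ i, if x.1 i = i then (if x.2 i then 1 else -1) else 0

section Glue

variable {α : Type*} {p : α → Prop} [DecidablePred p]

def glue (y : Perm {i // p i} × ({i // p i} → Bool))
    (z : Perm {i // ¬p i} × ({i // ¬p i} → Bool)) : Perm α × (α → Bool) :=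
  (y.1.subtypeCongr z.1, fun i => if h : p i then y.2 ⟨i, h⟩ else z.2 ⟨i, h⟩)

def AgreesOn (y : Perm {i // p i} × ({i // p i} → Bool)) (x : Perm α × (α → Bool)) : Prop :=
  ∀ i : {i // p i}, x.1 i = y.1 i ∧ x.2 i = y.2 i

variable (y : Perm {i // p i} × ({i // p i} → Bool))
  (z : Perm {i // ¬p i} × ({i // ¬p i} → Bool))

@[simp] lemma glue_fst_apply_left (i : {i // p i}) : (glue y z).1 i = y.1 i := by simp [glue]

@[simp] lemma glue_fst_apply_right (i : {i // ¬p i}) : (glue y z).1 i = z.1 i := by simp [glue]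

@[simp] lemma glue_snd_apply_left (i : {i // p i}) : (glue y z).2 i = y.2 i := dif_pos i.2

@[simp] lemma glue_snd_apply_right (i : {i // ¬p i}) : (glue y z).2 i = z.2 i := dif_neg i.2

lemma sum_glue [Fintype α] {M : Type*} [AddCommMonoid M] (f : α → α → Bool → M) :
    ∑ i, f i ((glue y z).1 i) ((glue y z).2 i) =
      ∑ i : {i // p i}, f i (y.1 i) (y.2 i) + ∑ i : {i // ¬p i}, f i (z.1 i) (z.2 i) := by
  rw [← Fintype.sum_subtype_add_sum_subtype p]
  simp

lemma isSignedInvolution_glue :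
    IsSignedInvolution (glue y z) ↔ IsSignedInvolution y ∧ IsSignedInvolution z := by
  have forall_split {P : α → Prop} :
      (∀ i, P i) ↔ (∀ i : {i // p i}, P i) ∧ ∀ i : {i // ¬p i}, P i :=
    ⟨fun h => ⟨fun i => h i, fun i => h i⟩,
      fun h i => if hi : p i then h.1 ⟨i, hi⟩ else h.2 ⟨i, hi⟩⟩
  rw [IsSignedInvolution, forall_split]
  simp [IsSignedInvolution, Subtype.coe_inj]

lemma signBalance_glue [Fintype α] [DecidableEq α] :
    signBalance (glue y z) = signBalance y + signBalance z := by
  simp only [signBalance, Subtype.coe_inj,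
    sum_glue y z fun i j b => if j = i then (if b then (1 : ℤ) else -1) else 0]

lemma agreesOn_glue : AgreesOn y (glue y z) := by
  simp [AgreesOn]

lemma glue_injective : Function.Injective (glue y) := by
  intro z z' h
  ext i
  · simpa using congr(($h).1 i)
  · simpa using congr(($h).2 i)

lemma exists_glue_of_agreesOn {x : Perm α × (α → Bool)} (hx : IsSignedInvolution x)
    (hxy : AgreesOn y x) : ∃ z, glue y z = x := by
  have mem_of_mem {i} (hi : p i) : p (x.1 i) := by
    simpa [(hxy ⟨i, hi⟩).1] using (y.1 ⟨i, hi⟩).2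
  have invariant (i : α) : ¬p (x.1 i) ↔ ¬p i :=
    ⟨fun h hi => h (mem_of_mem hi), fun h hi => h ((hx i).1 ▸ mem_of_mem hi)⟩
  refine ⟨(x.1.subtypePerm invariant, fun i => x.2 i), ?_⟩
  ext i
  · by_cases hi : p i
    · exact (glue_fst_apply_left y _ ⟨i, hi⟩).trans (hxy ⟨i, hi⟩).1.symm
    · simpa using glue_fst_apply_right y (x.1.subtypePerm invariant, fun i => x.2 i) ⟨i, hi⟩
  · by_cases hi : p i
    · exact (glue_snd_apply_left y _ ⟨i, hi⟩).trans (hxy ⟨i, hi⟩).2.symm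
    · simpa using glue_snd_apply_right y (x.1.subtypePerm invariant, fun i => x.2 i) ⟨i, hi⟩

end Glue

section Orbit

variable {α : Type*}

def fixedPart (a : α) (b : Bool) : Perm {i // i = a} × ({i // i = a} → Bool) := (1, fun _ => b)

lemma isSignedInvolution_fixedPart (a : α) (b : Bool) : IsSignedInvolution (fixedPart a b) := by
  simp [IsSignedInvolution, fixedPart]

lemma agreesOn_fixedPart_iff (a : α) (b : Bool) (x : Perm α × (α → Bool)) :
    AgreesOn (fixedPart a b) x ↔ x.1 a = a ∧ x.2 a = b := by
  simp [AgreesOn, fixedPart]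

variable [DecidableEq α]

lemma signBalance_fixedPart (a : α) (b : Bool) [Fintype {i // i = a}] :
    signBalance (fixedPart a b) = if b then 1 else -1 := by
  cases b <;> simp [signBalance, fixedPart]

def swapPart (a c : α) : Perm {i // i = a ∨ i = c} × ({i // i = a ∨ i = c} → Bool) :=
  (swap ⟨a, .inl rfl⟩ ⟨c, .inr rfl⟩, fun _ => true)

lemma isSignedInvolution_swapPart (a c : α) : IsSignedInvolution (swapPart a c) := by
  simp [IsSignedInvolution, swapPart, swap_apply_self]

lemma agreesOn_swapPart_iff {a c : α} (h : a ≠ c) {x : Perm α × (α → Bool)}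
    (hx : IsSignedInvolution x) : AgreesOn (swapPart a c) x ↔ x.1 a = c := by
  refine ⟨fun hxy => by simpa [swapPart] using (hxy ⟨a, .inl rfl⟩).1, fun hac => ?_⟩
  have hca : x.1 c = a := by rw [← hac, (hx a).1]
  rintro ⟨i, rfl | rfl⟩
  · simpa [swapPart, hac] using (hx i).2 (hac ▸ h.symm)
  · simpa [swapPart, hca] using (hx i).2 (hca ▸ h)

lemma swapPart_apply_ne {a c : α} (h : a ≠ c) (i : {i // i = a ∨ i = c}) :
    (swapPart a c).1 i ≠ i := by
  rcases i with ⟨i, rfl | rfl⟩ <;> simp [swapPart, swap_apply_left, swap_apply_right, h, h.symm]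

lemma signBalance_swapPart {a c : α} (h : a ≠ c) [Fintype {i // i = a ∨ i = c}] :
    signBalance (swapPart a c) = 0 :=
  sum_eq_zero fun i _ => if_neg (swapPart_apply_ne h i)

lemma card_support_swapPart {a c : α} (h : a ≠ c) [Fintype {i // i = a ∨ i = c}] :
    #(swapPart a c).1.support = 2 :=
  Perm.card_support_swap (by simpa using h)

end Orbit

section SignedInvolution

variable {α : Type*} [Fintype α] [DecidableEq α]

instance : DecidablePred (IsSignedInvolution (α := α)) :=
  fun _ => inferInstanceAs (Decidable (∀ _, _))

instance {p : α → Prop} [DecidablePred p] (y : Perm {i // p i} × ({i // p i} → Bool)) :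
    DecidablePred (AgreesOn y) :=
  fun _ => inferInstanceAs (Decidable (∀ _, _))

variable (α) in
def signedInvolutions (d : ℤ) : Finset (Perm α × (α → Bool)) :=
  univ.filter fun x => IsSignedInvolution x ∧ signBalance x = d

-- `signedInvPoly (Fin (p + q)) (p - q)` is the polynomial `A_{p,q}`.
variable (α) in
noncomputable def signedInvPoly (d : ℤ) : ℕ[X] :=
  ∑ x ∈ signedInvolutions α d, X ^ (#x.1.support / 2)

@[simp] lemma mem_signedInvolutions {d : ℤ} {x : Perm α × (α → Bool)} :
    x ∈ signedInvolutions α d ↔ IsSignedInvolution x ∧ signBalance x = d := by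
  simp [signedInvolutions]

lemma IsSignedInvolution.two_dvd_card_support {x : Perm α × (α → Bool)}
    (hx : IsSignedInvolution x) : 2 ∣ #x.1.support :=
  Perm.two_dvd_card_support (Equiv.ext fun i => (hx i).1)

lemma card_support_eq_sum (σ : Perm α) : #σ.support = ∑ i, if σ i = i then 0 else 1 := by
  rw [Perm.support, card_filter]
  exact sum_congr rfl fun i _ => by split_ifs <;> simp_all

lemma card_support_glue {p : α → Prop} [DecidablePred p]
    (y : Perm {i // p i} × ({i // p i} → Bool))
    (z : Perm {i // ¬p i} × ({i // ¬p i} → Bool)) :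
    #(glue y z).1.support = #y.1.support + #z.1.support := by
  simp only [card_support_eq_sum, Subtype.coe_inj, sum_glue y z fun i j _ => if j = i then 0 else 1]

lemma sum_filter_agreesOn {p : α → Prop} [DecidablePred p]
    {y : Perm {i // p i} × ({i // p i} → Bool)} (hy : IsSignedInvolution y) (d : ℤ) :
    ∑ x ∈ (signedInvolutions α d).filter (AgreesOn y), (X : ℕ[X]) ^ (#x.1.support / 2) =
      X ^ (#y.1.support / 2) * signedInvPoly {i // ¬p i} (d - signBalance y) := by
  rw [signedInvPoly, mul_sum]
  symm
  refine sum_bij (fun z _ => glue y z) (fun z hz => ?_) (fun z _ z' _ h => glue_injective y h)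
    (fun x hx => ?_) (fun z hz => ?_)
  · rw [mem_signedInvolutions] at hz
    simp [isSignedInvolution_glue, hy, hz.1, signBalance_glue, hz.2, agreesOn_glue]
  · simp only [mem_filter, mem_signedInvolutions] at hx
    obtain ⟨z, rfl⟩ := exists_glue_of_agreesOn y hx.1.1 hx.2
    rw [isSignedInvolution_glue, signBalance_glue] at hx
    exact ⟨z, mem_signedInvolutions.mpr ⟨hx.1.1.2, by rw [← hx.1.2]; ring⟩, rfl⟩
  · rw [card_support_glue, Nat.add_div_of_dvd_right hy.two_dvd_card_support, pow_add]

lemma signedInvPoly_eq_add_sum (a : α) (d : ℤ) :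
    signedInvPoly α d =
      signedInvPoly {i // ¬i = a} (d - 1) + signedInvPoly {i // ¬i = a} (d + 1) +
      ∑ c ∈ univ.erase a, X * signedInvPoly {i // ¬(i = a ∨ i = c)} d := by
  rw [signedInvPoly, ← sum_fiberwise (signedInvolutions α d) (fun x => x.1 a),
    ← add_sum_erase _ _ (mem_univ a)]
  congr 1
  · have fiber (b : Bool) : ((signedInvolutions α d).filter fun x => x.1 a = a).filter
        (fun x => x.2 a = b) = (signedInvolutions α d).filter (AgreesOn (fixedPart a b)) := by
      rw [filter_filter]
      exact filter_congr fun x _ => (agreesOn_fixedPart_iff a b x).symm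
    rw [← sum_fiberwise _ (fun x => x.2 a), Fintype.sum_bool, fiber, fiber,
      sum_filter_agreesOn (isSignedInvolution_fixedPart a true),
      sum_filter_agreesOn (isSignedInvolution_fixedPart a false),
      signBalance_fixedPart, signBalance_fixedPart]
    simp [fixedPart]
  · refine sum_congr rfl fun c hc => ?_
    have hac : a ≠ c := (ne_of_mem_erase hc).symm
    have fiber : ((signedInvolutions α d).filter fun x => x.1 a = c) =
        (signedInvolutions α d).filter (AgreesOn (swapPart a c)) :=
      filter_congr fun x hx => (agreesOn_swapPart_iff hac (mem_signedInvolutions.mp hx).1).symm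
    rw [fiber, sum_filter_agreesOn (isSignedInvolution_swapPart a c), card_support_swapPart hac,
      signBalance_swapPart hac, sub_zero, pow_one]

lemma signedInvPoly_congr {β : Type*} [Fintype β] [DecidableEq β] (e : α ≃ β) (d : ℤ) :
    signedInvPoly α d = signedInvPoly β d := by
  refine sum_equiv ((permCongr e).prodCongr (e.arrowCongr (Equiv.refl Bool))) (fun x => ?_)
    (fun x _ => ?_)
  · simp only [mem_signedInvolutions, IsSignedInvolution, signBalance]
    rw [← e.forall_congr_right, ← e.sum_comp]
    simp
  · simp only [card_support_eq_sum]
    rw [← e.sum_comp]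
    simp

lemma signedInvPoly_eq_of_card_eq {n : ℕ} (h : Fintype.card α = n) (d : ℤ) :
    signedInvPoly α d = signedInvPoly (Fin n) d :=
  signedInvPoly_congr (Fintype.equivFinOfCardEq h) d

lemma card_support_add_abs_signBalance_le (x : Perm α × (α → Bool)) :
    (#x.1.support : ℤ) + |signBalance x| ≤ Fintype.card α := by
  have pointwise (i : α) : (if x.1 i = i then 0 else 1 : ℤ) +
      |if x.1 i = i then (if x.2 i then 1 else -1) else 0| = 1 := by
    split_ifs <;> simp
  calc (#x.1.support : ℤ) + |signBalance x|
      ≤ ∑ i, (if x.1 i = i then 0 else 1 : ℤ) +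
          ∑ i, |if x.1 i = i then (if x.2 i then 1 else -1) else 0| := by
        rw [card_support_eq_sum]
        push_cast
        gcongr
        exact abs_sum_le_sum_abs _ _
    _ = Fintype.card α := by simp [← sum_add_distrib, pointwise]

lemma signedInvPoly_eq_zero {d : ℤ} (h : (Fintype.card α : ℤ) < |d|) :
    signedInvPoly α d = 0 :=
  sum_eq_zero fun x hx => by
    have := card_support_add_abs_signBalance_le x
    rw [(mem_signedInvolutions.mp hx).2] at this
    omega

end SignedInvolution

lemma signedInvPoly_fin_succ (n : ℕ) (d : ℤ) :
    signedInvPoly (Fin (n + 1)) d = signedInvPoly (Fin n) (d - 1) +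
      signedInvPoly (Fin n) (d + 1) + n • (X * signedInvPoly (Fin (n - 1)) d) := by
  have card_compl_zero : Fintype.card {i : Fin (n + 1) // ¬i = 0} = n := by
    simp [Fintype.card_subtype_compl]
  have card_compl_pair {c : Fin (n + 1)} (hc : c ∈ univ.erase 0) :
      Fintype.card {i // ¬(i = 0 ∨ i = c)} = n - 1 := by
    rw [Fintype.card_subtype_compl, Fintype.card_subtype, filter_or, filter_eq', filter_eq',
      if_pos (mem_univ _), if_pos (mem_univ _),
      card_union_of_disjoint (by simpa using (ne_of_mem_erase hc).symm)]
    simp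
  rw [signedInvPoly_eq_add_sum 0, signedInvPoly_eq_of_card_eq card_compl_zero,
    signedInvPoly_eq_of_card_eq card_compl_zero,
    sum_congr rfl fun c hc => by rw [signedInvPoly_eq_of_card_eq (card_compl_pair hc)], sum_const,
    card_erase_of_mem (mem_univ _), card_univ, Fintype.card_fin, add_tsub_cancel_right]

lemma signedInvPoly_fin_zero : signedInvPoly (Fin 0) 0 = 1 := by
  simp only [signedInvPoly, signedInvolutions, IsSignedInvolution, signBalance, univ_eq_empty,
    sum_empty, IsEmpty.forall_iff, and_self, filter_true]
  rw [Fintype.sum_subsingleton _ (1, isEmptyElim)]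
  simp

lemma signedInvPoly_fin_self (n : ℕ) : signedInvPoly (Fin n) n = 1 := by
  induction n with
  | zero => exact signedInvPoly_fin_zero
  | succ n ih =>
    rw [signedInvPoly_fin_succ, Nat.cast_succ, add_sub_cancel_right, ih,
      signedInvPoly_eq_zero (lt_abs.mpr (.inl (by simp))),
      signedInvPoly_eq_zero (lt_abs.mpr (.inl (by simp)))]
    simp

lemma signedInvPoly_fin_neg_self (n : ℕ) : signedInvPoly (Fin n) (-n) = 1 := by
  induction n with
  | zero => exact signedInvPoly_fin_zero
  | succ n ih =>
    rw [signedInvPoly_fin_succ, Nat.cast_succ, neg_add, neg_add_cancel_right, ih,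
      signedInvPoly_eq_zero (lt_abs.mpr (.inr (by simp; omega))),
      signedInvPoly_eq_zero (lt_abs.mpr (.inr (by simp; omega)))]
    simp

lemma signBalance_eq_card_sub_card {α : Type*} [Fintype α] [DecidableEq α]
    (x : Perm α × (α → Bool)) :
    signBalance x =
      (#{i | x.1 i = i ∧ x.2 i = true} : ℤ) - #{i | x.1 i = i ∧ x.2 i = false} := by
  simp only [signBalance, card_filter]
  push_cast
  rw [← sum_sub_distrib]
  exact sum_congr rfl fun i _ => by cases x.2 i <;> split_ifs <;> simp_all

lemma isSignedInv_iff {p q : ℕ} {x : Perm (Fin (p + q)) × (Fin (p + q) → Bool)} :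
    IsSignedInv p q x ↔ IsSignedInvolution x ∧ signBalance x = p - q := by
  rw [IsSignedInv, IsSignedInvolution, signBalance_eq_card_sub_card, Perm.ext_iff, ← and_assoc,
    ← forall_and]
  simp

lemma sum_gammaCount_eq_signedInvPoly (p q : ℕ) :
    ∑ k ∈ range (q + 1), C (gammaCount k p q : ℕ) * X ^ k =
      signedInvPoly (Fin (p + q)) (p - q) := by
  set S := signedInvolutions (Fin (p + q)) (p - q)
  have card_support_le {x} (hx : x ∈ S) : #x.1.support / 2 ∈ range (q + 1) := by
    have bound := card_support_add_abs_signBalance_le x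
    rw [(mem_signedInvolutions.mp hx).2, Fintype.card_fin] at bound
    have := le_abs_self ((p : ℤ) - q)
    rw [mem_range]
    omega
  have gammaCount_eq (k : ℕ) : gammaCount k p q = #{x ∈ S | #x.1.support / 2 = k} := by
    rw [gammaCount, ← Nat.card_eq_finsetCard]
    refine Nat.card_congr (Equiv.subtypeEquivRight fun x => ?_)
    rw [mem_filter, mem_signedInvolutions, ← isSignedInv_iff]
    refine and_congr_right fun hx => ?_
    have := (isSignedInv_iff.mp hx).1.two_dvd_card_support
    change #x.1.support = 2 * k ↔ _
    omega
  rw [signedInvPoly, ← sum_fiberwise_of_maps_to fun x hx => card_support_le hx]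
  refine sum_congr rfl fun k _ => ?_
  rw [sum_congr rfl fun x hx => by rw [(mem_filter.mp hx).2], sum_const, nsmul_eq_mul,
    gammaCount_eq]
  simp

section WeightedDelannoy

open DStep

def endpoint (l : List (DStep × ℕ)) : ℕ × ℕ := (l.map fun s => stepVec s.1).sum

@[simp] lemma endpoint_nil : endpoint [] = 0 := rfl

@[simp] lemma endpoint_append (l l' : List (DStep × ℕ)) :
    endpoint (l ++ l') = endpoint l + endpoint l' := by
  simp [endpoint]

lemma endpoint_replicate (n : ℕ) (s : DStep × ℕ) :
    endpoint (.replicate n s) = n • stepVec s.1 := by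
  simp [endpoint, List.sum_replicate]

lemma isWeightedDelannoy_iff {p q : ℕ} {l : List (DStep × ℕ)} :
    IsWeightedDelannoy p q l ↔ endpoint l = (p, q) ∧ IsWeightedFrom (0, 0) l :=
  Iff.rfl

lemma isWeightedFrom_append (ab : ℕ × ℕ) (l l' : List (DStep × ℕ)) :
    IsWeightedFrom ab (l ++ l') ↔
      IsWeightedFrom ab l ∧ IsWeightedFrom (ab + endpoint l) l' := by
  induction l generalizing ab with
  | nil => simp [IsWeightedFrom]
  | cons s l ih => simp [IsWeightedFrom, ih, endpoint, add_assoc, and_assoc]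

lemma stepVec_le_smul {s t : DStep} (hs : s ≠ D) {n : ℕ} (h : stepVec t ≤ n • stepVec s) :
    t = s := by
  cases s <;> cases t <;> simp_all [stepVec, Prod.le_def]

lemma isWeightedFrom_and_forall_iff {s : DStep} (hs : s ≠ D) {ab : ℕ × ℕ}
    {l : List (DStep × ℕ)} :
    IsWeightedFrom ab l ∧ (∀ x ∈ l, x.1 = s) ↔ l = .replicate l.length (s, 0) := by
  induction l generalizing ab with
  | nil => simp [IsWeightedFrom]
  | cons x l ih =>
    obtain ⟨t, m⟩ := x
    rw [List.length_cons, List.replicate_succ, List.cons_eq_cons, ← ih]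
    by_cases ht : t = s
    · subst ht
      simp only [IsWeightedFrom, hs, ↓reduceIte, List.mem_cons, forall_eq_or_imp, Prod.forall,
        true_and, Prod.mk.injEq]
      tauto
    · simp [ht]

lemma isWeightedDelannoy_axis_iff {s : DStep} (hs : s ≠ D) {n P Q : ℕ}
    (hPQ : (P, Q) = n • stepVec s) {l : List (DStep × ℕ)} :
    IsWeightedDelannoy P Q l ↔ l = .replicate n (s, 0) := by
  rw [isWeightedDelannoy_iff, hPQ]
  constructor
  · rintro ⟨hend, hl⟩
    have steps (x) (hx : x ∈ l) : x.1 = s := by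
      refine stepVec_le_smul hs (n := n) ?_
      rw [← hend]
      exact List.le_sum_of_mem (List.mem_map_of_mem (f := fun y : DStep × ℕ => stepVec y.1) hx)
    have hrep := (isWeightedFrom_and_forall_iff hs).mp ⟨hl, steps⟩
    rw [hrep, endpoint_replicate] at hend
    have : l.length = n := by cases s <;> simpa [stepVec] using hend
    rwa [← this]
  · rintro rfl
    exact ⟨endpoint_replicate .., ((isWeightedFrom_and_forall_iff hs).mpr (by simp)).1⟩

lemma subsingleton_weightedDelannoy_axis {s : DStep} (hs : s ≠ D) {n P Q : ℕ}
    (hPQ : (P, Q) = n • stepVec s) : Subsingleton {l // IsWeightedDelannoy P Q l} :=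
  ⟨fun W W' => Subtype.ext <| ((isWeightedDelannoy_axis_iff hs hPQ).mp W.2).trans
    ((isWeightedDelannoy_axis_iff hs hPQ).mp W'.2).symm⟩

lemma isWeightedDelannoy_append_singleton_iff {P Q : ℕ} {l : List (DStep × ℕ)}
    {s : DStep × ℕ} :
    IsWeightedDelannoy P Q (l ++ [s]) ↔ endpoint l + stepVec s.1 = (P, Q) ∧
      IsWeightedFrom (0, 0) l ∧
        if s.1 = D then 1 ≤ s.2 ∧ s.2 ≤ (endpoint l).1 + (endpoint l).2 + 1 else s.2 = 0 := by
  rw [isWeightedDelannoy_iff, endpoint_append, isWeightedFrom_append]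
  simp [IsWeightedFrom, endpoint]

section LastStep

variable {p q : ℕ} {l : List (DStep × ℕ)} {m : ℕ}

lemma isWeightedDelannoy_append_E_iff :
    IsWeightedDelannoy (p + 1) (q + 1) (l ++ [(E, m)]) ↔
      IsWeightedDelannoy p (q + 1) l ∧ m = 0 := by
  rw [isWeightedDelannoy_append_singleton_iff, isWeightedDelannoy_iff]
  obtain ⟨a, b⟩ := endpoint l
  simp [stepVec, and_assoc]

lemma isWeightedDelannoy_append_N_iff :
    IsWeightedDelannoy (p + 1) (q + 1) (l ++ [(N, m)]) ↔
      IsWeightedDelannoy (p + 1) q l ∧ m = 0 := by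
  rw [isWeightedDelannoy_append_singleton_iff, isWeightedDelannoy_iff]
  obtain ⟨a, b⟩ := endpoint l
  simp [stepVec, and_assoc]

lemma isWeightedDelannoy_append_D_iff :
    IsWeightedDelannoy (p + 1) (q + 1) (l ++ [(D, m)]) ↔
      IsWeightedDelannoy p q l ∧ 1 ≤ m ∧ m ≤ p + q + 1 := by
  rw [isWeightedDelannoy_append_singleton_iff, isWeightedDelannoy_iff]
  obtain ⟨a, b⟩ := endpoint l
  simp only [stepVec, Prod.mk_add_mk, Prod.mk.injEq, Nat.add_right_cancel_iff, ↓reduceIte,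
    and_assoc]
  constructor <;> rintro ⟨rfl, rfl, hl, hm⟩ <;> exact ⟨rfl, rfl, hl, hm⟩

variable (p q) in
def appendLastStep :
    {l // IsWeightedDelannoy p (q + 1) l} ⊕ {l // IsWeightedDelannoy (p + 1) q l} ⊕
      Fin (p + q + 1) × {l // IsWeightedDelannoy p q l} →
        {l // IsWeightedDelannoy (p + 1) (q + 1) l}
  | .inl W => ⟨W.1 ++ [(E, 0)], isWeightedDelannoy_append_E_iff.mpr ⟨W.2, rfl⟩⟩
  | .inr (.inl W) => ⟨W.1 ++ [(N, 0)], isWeightedDelannoy_append_N_iff.mpr ⟨W.2, rfl⟩⟩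
  | .inr (.inr (j, W)) => ⟨W.1 ++ [(D, (j : ℕ) + 1)],
      isWeightedDelannoy_append_D_iff.mpr ⟨W.2, by omega, by omega⟩⟩

lemma appendLastStep_bijective : Function.Bijective (appendLastStep p q) := by
  constructor
  · rintro (W | W | ⟨j, W⟩) (W' | W' | ⟨j', W'⟩) h <;>
      simp [appendLastStep, Subtype.ext_iff] at h ⊢
    exacts [h, h, ⟨Fin.ext h.2, h.1⟩]
  · rintro ⟨l, hl⟩
    obtain rfl | ⟨L, ⟨t, m⟩, rfl⟩ := l.eq_nil_or_concat'
    · simp [isWeightedDelannoy_iff, Prod.ext_iff] at hl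
    cases t
    · obtain ⟨hL, rfl⟩ := isWeightedDelannoy_append_E_iff.mp hl
      exact ⟨.inl ⟨L, hL⟩, rfl⟩
    · obtain ⟨hL, rfl⟩ := isWeightedDelannoy_append_N_iff.mp hl
      exact ⟨.inr (.inl ⟨L, hL⟩), rfl⟩
    · obtain ⟨hL, hm⟩ := isWeightedDelannoy_append_D_iff.mp hl
      refine ⟨.inr (.inr (⟨m - 1, by omega⟩, ⟨L, hL⟩)), ?_⟩
      simp only [appendLastStep, Subtype.mk.injEq, List.append_cancel_left_eq, List.cons.injEq,
        Prod.mk.injEq, true_and, and_true]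
      omega

variable (p q) in
noncomputable def appendLastStepEquiv :
    {l // IsWeightedDelannoy p (q + 1) l} ⊕ {l // IsWeightedDelannoy (p + 1) q l} ⊕
      Fin (p + q + 1) × {l // IsWeightedDelannoy p q l} ≃
        {l // IsWeightedDelannoy (p + 1) (q + 1) l} :=
  .ofBijective _ appendLastStep_bijective

end LastStep

instance finite_weightedDelannoy : ∀ p q, Finite {l // IsWeightedDelannoy p q l}
  | p, 0 =>
    have := subsingleton_weightedDelannoy_axis (s := E) (n := p) (P := p) (Q := 0)
      (by decide) (by simp [stepVec])
    inferInstance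
  | 0, q + 1 =>
    have := subsingleton_weightedDelannoy_axis (s := N) (n := q + 1) (P := 0) (Q := q + 1)
      (by decide) (by simp [stepVec])
    inferInstance
  | p + 1, q + 1 =>
    have := finite_weightedDelannoy p (q + 1)
    have := finite_weightedDelannoy (p + 1) q
    have := finite_weightedDelannoy p q
    .of_equiv _ (appendLastStepEquiv p q)

noncomputable instance (p q : ℕ) : Fintype {l // IsWeightedDelannoy p q l} := .ofFinite _

noncomputable def weightedDelannoyPoly (p q : ℕ) : ℕ[X] :=
  ∑ᶠ W : {l // IsWeightedDelannoy p q l}, X ^ dcount W.1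

lemma weightedDelannoyPoly_axis {s : DStep} (hs : s ≠ D) {n P Q : ℕ}
    (hPQ : (P, Q) = n • stepVec s) : weightedDelannoyPoly P Q = 1 := by
  rw [weightedDelannoyPoly, finsum_eq_single _ ⟨_, (isWeightedDelannoy_axis_iff hs hPQ).mpr rfl⟩
    fun W hW => absurd (Subtype.ext ((isWeightedDelannoy_axis_iff hs hPQ).mp W.2)) hW]
  simp [dcount, hs]

lemma dcount_append_singleton (l : List (DStep × ℕ)) (s : DStep × ℕ) :
    dcount (l ++ [s]) = dcount l + if s.1 = D then 1 else 0 := by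
  by_cases h : s.1 = D <;> simp [dcount, h]

lemma weightedDelannoyPoly_succ_succ (p q : ℕ) :
    weightedDelannoyPoly (p + 1) (q + 1) = weightedDelannoyPoly p (q + 1) +
      weightedDelannoyPoly (p + 1) q + (p + q + 1) • (X * weightedDelannoyPoly p q) := by
  simp only [weightedDelannoyPoly, ← finsum_comp_equiv (appendLastStepEquiv p q),
    finsum_eq_sum_of_fintype]
  rw [Fintype.sum_sum_type, Fintype.sum_sum_type, Fintype.sum_prod_type]
  simp [appendLastStepEquiv, appendLastStep, dcount_append_singleton, pow_succ', mul_sum, add_assoc]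

end WeightedDelannoy

theorem signedInvPoly_eq_weightedDelannoyPoly :
    ∀ p q : ℕ, signedInvPoly (Fin (p + q)) (p - q) = weightedDelannoyPoly p q
  | p, 0 => by
    rw [weightedDelannoyPoly_axis (s := .E) (n := p) (by decide) (by simp [stepVec])]
    simpa using signedInvPoly_fin_self p
  | 0, q + 1 => by
    rw [weightedDelannoyPoly_axis (s := .N) (n := q + 1) (by decide) (by simp [stepVec]),
      Nat.zero_add, Nat.cast_zero, zero_sub]
    exact signedInvPoly_fin_neg_self (q + 1)
  | p + 1, q + 1 => by
    have right := signedInvPoly_eq_weightedDelannoyPoly p (q + 1)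
    have left := signedInvPoly_eq_weightedDelannoyPoly (p + 1) q
    have diag := signedInvPoly_eq_weightedDelannoyPoly p q
    rw [← Nat.add_assoc, Nat.cast_succ, ← sub_sub] at right
    rw [Nat.add_right_comm, Nat.cast_succ, add_sub_right_comm] at left
    rw [show p + 1 + (q + 1) = p + q + 1 + 1 by ring, signedInvPoly_fin_succ, Nat.add_sub_cancel,
      weightedDelannoyPoly_succ_succ, ← right, ← left, ← diag, Nat.cast_succ, Nat.cast_succ,
      add_sub_add_right_eq_sub]

theorem stmt10 (p q : ℕ) :
    (∑ k ∈ Finset.range (q + 1), Polynomial.C (gammaCount k p q) * Polynomial.X ^ k :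
        Polynomial ℕ) =
      ∑ᶠ W : {l : List (DStep × ℕ) // IsWeightedDelannoy p q l},
        (Polynomial.X : Polynomial ℕ) ^ dcount W.1 :=
  (sum_gammaCount_eq_signedInvPoly p q).trans (signedInvPoly_eq_weightedDelannoyPoly p q)
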